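/- arXiv:2209.11898 — 2 statements merged into one kernel-verified Lean document; each statement's English description precedes it below -/
import Mathlib

section
/- For any grid state x of an n-by-n grid diagram, the Maslov grading M(x) = J(x,x) - 2J(x,O) + J(O,O) + 1 is an integer. -/
/-- `pairCount P Q` counts pairs `(p, q) ∈ P × Q` with `p` strictly southwest of `q`. -/
noncomputable def pairCount (P Q : Finset (ℝ × ℝ)) : ℕ :=
  ((P ×ˢ Q).filter (fun pq => pq.1.1 < pq.2.1 ∧ pq.1.2 < pq.2.2)).card

/-- `J(P,Q) = (I(P,Q) + I(Q,P))/2`. -/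
noncomputable def Jfun (P Q : Finset (ℝ × ℝ)) : ℚ :=
  ((pairCount P Q : ℚ) + (pairCount Q P : ℚ)) / 2

/-- The points of the grid state associated to the permutation `σ`:
one point on each horizontal and each vertical grid line, at integer coordinates. -/
noncomputable def gridStatePts (n : ℕ) (σ : Equiv.Perm (Fin n)) : Finset (ℝ × ℝ) :=
  Finset.univ.image (fun i : Fin n => (((i : ℕ) : ℝ), ((σ i : ℕ) : ℝ)))

/-- The centers of the marked squares associated to the permutation `σ`:
one marking in each row and each column, at half-integer coordinates. -/
noncomputable def markingPts (n : ℕ) (σ : Equiv.Perm (Fin n)) : Finset (ℝ × ℝ) :=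
  Finset.univ.image (fun i : Fin n => (((i : ℕ) : ℝ) + 1/2, ((σ i : ℕ) : ℝ) + 1/2))

/-- The Maslov grading `M(x) = J(x,x) - 2 J(x,O) + J(O,O) + 1` of the grid state `σx`
with respect to the markings `σO`. -/
noncomputable def maslov (n : ℕ) (σx σO : Equiv.Perm (Fin n)) : ℚ :=
  Jfun (gridStatePts n σx) (gridStatePts n σx)
    - 2 * Jfun (gridStatePts n σx) (markingPts n σO)
    + Jfun (markingPts n σO) (markingPts n σO) + 1

theorem Jfun_self (P : Finset (ℝ × ℝ)) : Jfun P P = pairCount P P := by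
  rw [Jfun]
  ring

theorem two_mul_Jfun (P Q : Finset (ℝ × ℝ)) :
    2 * Jfun P Q = pairCount P Q + pairCount Q P := by
  rw [Jfun]
  ring

theorem exists_int_Jfun_self_sub_two_mul_Jfun_add_Jfun_self (P Q : Finset (ℝ × ℝ)) :
    ∃ m : ℤ, Jfun P P - 2 * Jfun P Q + Jfun Q Q = m :=
  ⟨(pairCount P P : ℤ) - pairCount P Q - pairCount Q P + pairCount Q Q, by
    rw [Jfun_self, Jfun_self, two_mul_Jfun]
    push_cast
    ring⟩

/-- For any grid state `x` of an `n`-by-`n` grid diagram, the Maslov grading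
`M(x) = J(x,x) - 2J(x,O) + J(O,O) + 1` is an integer. -/
theorem stmt1 (n : ℕ) (σx σO : Equiv.Perm (Fin n)) :
    ∃ m : ℤ, maslov n σx σO = (m : ℚ) := by
  obtain ⟨m, hm⟩ := exists_int_Jfun_self_sub_two_mul_Jfun_add_Jfun_self
    (gridStatePts n σx) (markingPts n σO)
  exact ⟨m + 1, by rw [maslov, hm, Int.cast_add, Int.cast_one]⟩
end

section
/- If x and y are grid states connected by a rectangle r (an embedded rectangle in the grid torus with corners alternating between x and y, going from x to y), then M(x) - M(y) = 1 - 2·|r ∩ O| + 2·|x ∩ Int(r)|. -/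
/-- The grid state obtained from `σx` by the rectangle with incoming (SW and NE) corners
at columns `i`, `j`: the rows `σx i` and `σx j` are exchanged. -/
def rectTarget (n : ℕ) (σx : Equiv.Perm (Fin n)) (i j : Fin n) : Equiv.Perm (Fin n) :=
  σx.trans (Equiv.swap (σx i) (σx j))

/-- The number of markings (for the marking permutation `σm`) contained in the rectangle
with SW corner `(i, σx i)` and NE corner `(j, σx j)`. -/
def rectMarkCount (n : ℕ) (σx σm : Equiv.Perm (Fin n)) (i j : Fin n) : ℕ :=
  (Finset.univ.filter (fun k : Fin n =>
    (i : ℕ) ≤ (k : ℕ) ∧ (k : ℕ) < (j : ℕ) ∧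
    (σx i : ℕ) ≤ (σm k : ℕ) ∧ (σm k : ℕ) < (σx j : ℕ))).card

/-- The number of points of the grid state `σx` in the interior of the rectangle
with SW corner `(i, σx i)` and NE corner `(j, σx j)`. -/
def rectIntCount (n : ℕ) (σx : Equiv.Perm (Fin n)) (i j : Fin n) : ℕ :=
  (Finset.univ.filter (fun k : Fin n =>
    (i : ℕ) < (k : ℕ) ∧ (k : ℕ) < (j : ℕ) ∧
    (σx i : ℕ) < (σx k : ℕ) ∧ (σx k : ℕ) < (σx j : ℕ))).card

/-!
Grid states and markings are graphs of permutations, so each southwest pair count `I(P, Q)` is a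
double sum over columns of indicator functions; the half-integer offset of the markings only
turns strict comparisons into non-strict ones. The target state is `σ ∘ (i j)`, and for one
transposition `∑ g a * h a - ∑ g a * h ((i j) a) = (g i - g j) * (h i - h j)`. For the
indicators at hand the two factors are the indicators of the column strip `[i, j)` and the row
strip `[σ i, σ j)`, whose product is the indicator of the rectangle; this gives
`I(x, O) - I(y, O) = I(O, x) - I(O, y) = |r ∩ O|`. In `I(x, x)` both points of a pair move;
moving them one at a time yields the interior count twice, plus one for the corner pair `(i, j)`.
-/

open Finset

section Indicators

variable {R : Type*} [Ring R] {α : Type*} [LinearOrder α]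

lemma ite_le_sub_ite_le {a b : α} (hab : a ≤ b) (c : α) :
    ((if a ≤ c then 1 else 0) - (if b ≤ c then 1 else 0) : R) =
      if a ≤ c ∧ c < b then 1 else 0 := by
  split_ifs <;> simp_all <;> order

lemma ite_lt_sub_ite_lt {a b : α} (hab : a ≤ b) (c : α) :
    ((if a < c then 1 else 0) - (if b < c then 1 else 0) : R) =
      if a < c ∧ c ≤ b then 1 else 0 := by
  split_ifs <;> simp_all <;> order

lemma ite_gt_sub_ite_gt {a b : α} (hab : a ≤ b) (c : α) :
    ((if c < a then 1 else 0) - (if c < b then 1 else 0) : R) =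
      -if a ≤ c ∧ c < b then 1 else 0 := by
  split_ifs <;> simp_all <;> order

end Indicators

lemma boole_and {R : Type*} [MulZeroOneClass R] (P Q : Prop) [Decidable P] [Decidable Q] :
    (if P ∧ Q then (1 : R) else 0) = (if P then 1 else 0) * (if Q then 1 else 0) := by
  rw [ite_zero_mul_ite_zero, mul_one]

lemma sum_mul_sub_sum_mul_swap {α R : Type*} [Fintype α] [DecidableEq α] [CommRing R]
    (g h : α → R) (i j : α) :
    ∑ a, g a * h a - ∑ a, g a * h (Equiv.swap i j a) = (g i - g j) * (h i - h j) := by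
  obtain rfl | hij := eq_or_ne i j
  · simp
  rw [← sum_sub_distrib, Fintype.sum_eq_add i j hij]
  · simp only [Equiv.swap_apply_left, Equiv.swap_apply_right]
    ring
  · rintro a ⟨hai, haj⟩
    rw [Equiv.swap_apply_of_ne_of_ne hai haj, sub_self]

lemma sum_mul_sub_sum_swap_mul {α R : Type*} [Fintype α] [DecidableEq α] [CommRing R]
    (g h : α → R) (i j : α) :
    ∑ a, g a * h a - ∑ a, g (Equiv.swap i j a) * h a = (g i - g j) * (h i - h j) := by
  simpa only [mul_comm (g _), mul_comm (h i - h j)] using sum_mul_sub_sum_mul_swap h g i j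

lemma pairCount_image_image {ι : Type*} [Fintype ι] {f g : ι → ℝ × ℝ}
    (hf : Function.Injective f) (hg : Function.Injective g) :
    (pairCount (univ.image f) (univ.image g) : ℚ) =
      ∑ a, ∑ b, if (f a).1 < (g b).1 ∧ (f a).2 < (g b).2 then 1 else 0 := by
  classical
  rw [pairCount, ← prodMap_image_product, filter_image,
    card_image_of_injective _ (hf.prodMap hg), ← sum_boole, univ_product_univ, ← univ_product_univ,
    sum_product]
  rfl

lemma Nat.cast_lt_cast_add_half {a b : ℕ} : (a : ℝ) < b + 1 / 2 ↔ a ≤ b := by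
  refine ⟨fun h => Nat.lt_succ_iff.mp ?_, fun h => by linarith [(Nat.cast_le (α := ℝ)).mpr h]⟩
  exact_mod_cast (by linarith : (a : ℝ) < b + 1)

lemma Nat.cast_add_half_lt_cast {a b : ℕ} : (a : ℝ) + 1 / 2 < b ↔ a < b := by
  refine ⟨fun h => by exact_mod_cast (by linarith : (a : ℝ) < b), fun h => ?_⟩
  linarith [(Nat.cast_le (α := ℝ)).mpr (Nat.succ_le_of_lt h), Nat.cast_succ (R := ℝ) a]

section GridCounts

variable {n : ℕ}

def ltPairCount (σ τ : Equiv.Perm (Fin n)) : ℚ :=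
  ∑ a : Fin n, ∑ b : Fin n, if (a : ℕ) < b ∧ (σ a : ℕ) < τ b then 1 else 0

def lePairCount (σ τ : Equiv.Perm (Fin n)) : ℚ :=
  ∑ a : Fin n, ∑ b : Fin n, if (a : ℕ) ≤ b ∧ (σ a : ℕ) ≤ τ b then 1 else 0

lemma gridPoint_injective (σ : Equiv.Perm (Fin n)) :
    Function.Injective fun a : Fin n => (((a : ℕ) : ℝ), ((σ a : ℕ) : ℝ)) :=
  fun a b h => Fin.ext (by simpa using congrArg Prod.fst h)

lemma markingPoint_injective (σ : Equiv.Perm (Fin n)) :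
    Function.Injective fun a : Fin n => (((a : ℕ) : ℝ) + 1 / 2, ((σ a : ℕ) : ℝ) + 1 / 2) :=
  fun a b h => Fin.ext (by simpa using congrArg Prod.fst h)

lemma pairCount_gridStatePts_gridStatePts (σ τ : Equiv.Perm (Fin n)) :
    (pairCount (gridStatePts n σ) (gridStatePts n τ) : ℚ) = ltPairCount σ τ := by
  rw [gridStatePts, gridStatePts,
    pairCount_image_image (gridPoint_injective σ) (gridPoint_injective τ)]
  simp only [Nat.cast_lt, ltPairCount]

lemma pairCount_gridStatePts_markingPts (σ τ : Equiv.Perm (Fin n)) :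
    (pairCount (gridStatePts n σ) (markingPts n τ) : ℚ) = lePairCount σ τ := by
  rw [gridStatePts, markingPts,
    pairCount_image_image (gridPoint_injective σ) (markingPoint_injective τ)]
  simp only [Nat.cast_lt_cast_add_half, lePairCount]

lemma pairCount_markingPts_gridStatePts (σ τ : Equiv.Perm (Fin n)) :
    (pairCount (markingPts n σ) (gridStatePts n τ) : ℚ) = ltPairCount σ τ := by
  rw [markingPts, gridStatePts,
    pairCount_image_image (markingPoint_injective σ) (gridPoint_injective τ)]
  simp only [Nat.cast_add_half_lt_cast, ltPairCount]

lemma pairCount_markingPts_markingPts (σ τ : Equiv.Perm (Fin n)) :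
    (pairCount (markingPts n σ) (markingPts n τ) : ℚ) = ltPairCount σ τ := by
  rw [markingPts, markingPts,
    pairCount_image_image (markingPoint_injective σ) (markingPoint_injective τ)]
  simp only [add_lt_add_iff_right, Nat.cast_lt, ltPairCount]

lemma maslov_eq (σ σO : Equiv.Perm (Fin n)) :
    maslov n σ σO = ltPairCount σ σ - lePairCount σ σO - ltPairCount σO σ
      + ltPairCount σO σO + 1 := by
  simp only [maslov, Jfun, pairCount_gridStatePts_gridStatePts, pairCount_gridStatePts_markingPts,
    pairCount_markingPts_gridStatePts, pairCount_markingPts_markingPts]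
  ring

lemma rectTarget_apply (σ : Equiv.Perm (Fin n)) (i j k : Fin n) :
    rectTarget n σ i j k = σ (Equiv.swap i j k) := by
  simp only [rectTarget, Equiv.trans_apply, Equiv.swap_apply_apply, Equiv.Perm.coe_mul,
    Equiv.Perm.coe_inv, Function.comp_apply, Equiv.symm_apply_apply]

end GridCounts

section Rectangle

variable {n : ℕ} (σ σO : Equiv.Perm (Fin n)) {i j : Fin n}

lemma rectMarkCount_eq_sum :
    (rectMarkCount n σ σO i j : ℚ) =
      ∑ k : Fin n, if (i : ℕ) ≤ k ∧ (k : ℕ) < j ∧ (σ i : ℕ) ≤ σO k ∧ (σO k : ℕ) < σ j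
        then 1 else 0 := by
  rw [rectMarkCount, ← sum_boole]

lemma rectIntCount_eq_sum :
    (rectIntCount n σ i j : ℚ) =
      ∑ k : Fin n, if (i : ℕ) < k ∧ (k : ℕ) < j ∧ (σ i : ℕ) < σ k ∧ (σ k : ℕ) < σ j
        then 1 else 0 := by
  rw [rectIntCount, ← sum_boole]

lemma lePairCount_sub_lePairCount_rectTarget (hcol : (i : ℕ) ≤ j) (hrow : (σ i : ℕ) ≤ σ j) :
    lePairCount σ σO - lePairCount (rectTarget n σ i j) σO = rectMarkCount n σ σO i j := by
  have column : ∀ b : Fin n,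
      (∑ a : Fin n, if (a : ℕ) ≤ b ∧ (σ a : ℕ) ≤ σO b then (1 : ℚ) else 0)
        - ∑ a : Fin n, (if (a : ℕ) ≤ b ∧ (σ (Equiv.swap i j a) : ℕ) ≤ σO b then 1 else 0)
      = if (i : ℕ) ≤ b ∧ (b : ℕ) < j ∧ (σ i : ℕ) ≤ σO b ∧ (σO b : ℕ) < σ j then 1 else 0 := by
    intro b
    conv_lhs => simp only [boole_and]
    rw [sum_mul_sub_sum_mul_swap, ite_le_sub_ite_le hcol, ite_le_sub_ite_le hrow,
      ite_zero_mul_ite_zero, mul_one]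
    simp only [and_assoc]
  rw [lePairCount, lePairCount, rectMarkCount_eq_sum]
  conv_lhs => enter [1]; rw [sum_comm]
  conv_lhs => enter [2]; rw [sum_comm]
  rw [← sum_sub_distrib]
  simp only [rectTarget_apply, column]

lemma ltPairCount_sub_ltPairCount_rectTarget (hcol : (i : ℕ) ≤ j) (hrow : (σ i : ℕ) ≤ σ j) :
    ltPairCount σO σ - ltPairCount σO (rectTarget n σ i j) = rectMarkCount n σ σO i j := by
  have row : ∀ a : Fin n,
      (∑ b : Fin n, if (a : ℕ) < b ∧ (σO a : ℕ) < σ b then (1 : ℚ) else 0)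
        - ∑ b : Fin n, (if (a : ℕ) < b ∧ (σO a : ℕ) < σ (Equiv.swap i j b) then 1 else 0)
      = if (i : ℕ) ≤ a ∧ (a : ℕ) < j ∧ (σ i : ℕ) ≤ σO a ∧ (σO a : ℕ) < σ j then 1 else 0 := by
    intro a
    conv_lhs => simp only [boole_and]
    rw [sum_mul_sub_sum_mul_swap, ite_gt_sub_ite_gt hcol, ite_gt_sub_ite_gt hrow,
      neg_mul_neg, ite_zero_mul_ite_zero, mul_one]
    simp only [and_assoc]
  rw [ltPairCount, ltPairCount, rectMarkCount_eq_sum, ← sum_sub_distrib]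
  simp only [rectTarget_apply, row]

-- Only the first point of each pair is moved: halfway between `σ` and `rectTarget n σ i j`.
def ltPairCountSwapLeft (i j : Fin n) : ℚ :=
  ∑ a : Fin n, ∑ b : Fin n,
    if (Equiv.swap i j a : ℕ) < b ∧ (σ a : ℕ) < σ b then 1 else 0

lemma ltPairCount_rectTarget_self :
    ltPairCount (rectTarget n σ i j) (rectTarget n σ i j) =
      ∑ a : Fin n, ∑ b : Fin n,
        if (Equiv.swap i j a : ℕ) < Equiv.swap i j b ∧ (σ a : ℕ) < σ b then 1 else 0 := by
  rw [ltPairCount, ← Equiv.sum_comp (Equiv.swap i j)]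
  refine sum_congr rfl fun a _ => ?_
  rw [← Equiv.sum_comp (Equiv.swap i j)]
  simp only [rectTarget_apply, Equiv.swap_apply_self]

lemma ite_corner_eq (hcol : (i : ℕ) < j) (hrow : (σ i : ℕ) < σ j) (b : Fin n) :
    (if (i : ℕ) < b ∧ (b : ℕ) ≤ j ∧ (σ i : ℕ) < σ b ∧ (σ b : ℕ) ≤ σ j then (1 : ℚ) else 0) =
      (if (i : ℕ) < b ∧ (b : ℕ) < j ∧ (σ i : ℕ) < σ b ∧ (σ b : ℕ) < σ j then 1 else 0)
        + if b = j then 1 else 0 := by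
  obtain rfl | hbj := eq_or_ne b j
  · simp [hcol, hrow]
  have hb : (b : ℕ) ≠ j := Fin.val_ne_of_ne hbj
  have hσb : (σ b : ℕ) ≠ σ j := Fin.val_ne_of_ne (σ.injective.ne hbj)
  rw [if_neg hbj, add_zero]
  exact if_congr (by omega) rfl rfl

lemma ite_swap_interior_eq (a : Fin n) :
    (if (i : ℕ) ≤ Equiv.swap i j a ∧ (Equiv.swap i j a : ℕ) < j ∧ (σ i : ℕ) ≤ σ a ∧
        (σ a : ℕ) < σ j then (1 : ℚ) else 0) =
      if (i : ℕ) < a ∧ (a : ℕ) < j ∧ (σ i : ℕ) < σ a ∧ (σ a : ℕ) < σ j then 1 else 0 := by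
  obtain rfl | hai := eq_or_ne a i
  · simp
  obtain rfl | haj := eq_or_ne a j
  · simp
  have ha : (a : ℕ) ≠ i := Fin.val_ne_of_ne hai
  have hσa : (σ a : ℕ) ≠ σ i := Fin.val_ne_of_ne (σ.injective.ne hai)
  rw [Equiv.swap_apply_of_ne_of_ne hai haj]
  exact if_congr (by omega) rfl rfl

lemma ltPairCount_sub_ltPairCountSwapLeft (hcol : (i : ℕ) < j) (hrow : (σ i : ℕ) < σ j) :
    ltPairCount σ σ - ltPairCountSwapLeft σ i j = rectIntCount n σ i j + 1 := by
  have column : ∀ b : Fin n,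
      (∑ a : Fin n, if (a : ℕ) < b ∧ (σ a : ℕ) < σ b then (1 : ℚ) else 0)
        - ∑ a : Fin n, (if (Equiv.swap i j a : ℕ) < b ∧ (σ a : ℕ) < σ b then 1 else 0)
      = (if (i : ℕ) < b ∧ (b : ℕ) < j ∧ (σ i : ℕ) < σ b ∧ (σ b : ℕ) < σ j then 1 else 0)
        + if b = j then 1 else 0 := by
    intro b
    conv_lhs => simp only [boole_and]
    rw [sum_mul_sub_sum_swap_mul, ite_lt_sub_ite_lt hcol.le, ite_lt_sub_ite_lt hrow.le,
      ite_zero_mul_ite_zero, mul_one, ← ite_corner_eq σ hcol hrow]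
    simp only [and_assoc]
  rw [ltPairCount, ltPairCountSwapLeft, rectIntCount_eq_sum]
  conv_lhs => enter [1]; rw [sum_comm]
  conv_lhs => enter [2]; rw [sum_comm]
  rw [← sum_sub_distrib]
  simp only [column, sum_add_distrib, sum_ite_eq', mem_univ, if_true]

lemma ltPairCountSwapLeft_sub_ltPairCount_rectTarget (hcol : (i : ℕ) ≤ j)
    (hrow : (σ i : ℕ) ≤ σ j) :
    ltPairCountSwapLeft σ i j - ltPairCount (rectTarget n σ i j) (rectTarget n σ i j) =
      rectIntCount n σ i j := by
  have row : ∀ a : Fin n,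
      (∑ b : Fin n, if (Equiv.swap i j a : ℕ) < b ∧ (σ a : ℕ) < σ b then (1 : ℚ) else 0)
        - ∑ b : Fin n,
            (if (Equiv.swap i j a : ℕ) < Equiv.swap i j b ∧ (σ a : ℕ) < σ b then 1 else 0)
      = if (i : ℕ) < a ∧ (a : ℕ) < j ∧ (σ i : ℕ) < σ a ∧ (σ a : ℕ) < σ j then 1 else 0 := by
    intro a
    conv_lhs => simp only [boole_and]
    rw [sum_mul_sub_sum_swap_mul, ite_gt_sub_ite_gt hcol, ite_gt_sub_ite_gt hrow,
      neg_mul_neg, ite_zero_mul_ite_zero, mul_one, ← ite_swap_interior_eq σ]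
    simp only [and_assoc]
  rw [ltPairCountSwapLeft, ltPairCount_rectTarget_self, rectIntCount_eq_sum, ← sum_sub_distrib]
  simp only [row]

end Rectangle

/-- If `x` and `y` are grid states connected by a rectangle `r`, then
`M(x) - M(y) = 1 - 2 |r ∩ O| + 2 |x ∩ Int r|`. -/
theorem stmt3 (n : ℕ) (σx σO : Equiv.Perm (Fin n)) (i j : Fin n)
    (hcol : (i : ℕ) < (j : ℕ)) (hrow : (σx i : ℕ) < (σx j : ℕ)) :
    maslov n σx σO - maslov n (rectTarget n σx i j) σO =
      1 - 2 * (rectMarkCount n σx σO i j : ℚ) + 2 * (rectIntCount n σx i j : ℚ) := by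
  have hxx₁ := ltPairCount_sub_ltPairCountSwapLeft σx hcol hrow
  have hxx₂ := ltPairCountSwapLeft_sub_ltPairCount_rectTarget σx hcol.le hrow.le
  have hxO := lePairCount_sub_lePairCount_rectTarget σx σO hcol.le hrow.le
  have hOx := ltPairCount_sub_ltPairCount_rectTarget σx σO hcol.le hrow.le
  rw [maslov_eq, maslov_eq]
  linear_combination hxx₁ + hxx₂ - hxO - hOx
end
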